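/- Let (H,R) be a braided bialgebra over a field k with R = Σ s_i⊗t_i, and let K ∈ H be an invertible element satisfying Δ(K) = (K⊗1)·R·(1⊗K)·R_21. For left H-modules M and N define the k-linear map ĉ_{M,N} : M⊗N → N⊗M by ĉ_{M,N}(m⊗n) = Σ (s_i·n)⊗(t_i·m), and let k_M : M → M denote the k-linear map given by the action of K. Then for all left H-modules M,N the reflection equation holds as an identity of k-linear endomorphisms of M⊗N: (k_M⊗id_N)∘ĉ_{N,M}∘(k_N⊗id_M)∘ĉ_{M,N} = ĉ_{N,M}∘(k_N⊗id_M)∘ĉ_{M,N}∘(k_M⊗id_N). -/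

import Mathlib

/-
Write `ĉ^z_{M,N}(m ⊗ n) = z · (n ⊗ m)` for `z ∈ H ⊗ H`, so that `ĉ = ĉ^R`. Then
`(z ·) ∘ ĉ^w = ĉ^{z w}`, `ĉ^z ∘ (w ·) = ĉ^{z w₂₁}` and `ĉ^z_{N,M} ∘ ĉ^w_{M,N} = (z w₂₁ ·)`, so each
side of the reflection equation is the action on `M ⊗ N` of a single element of `H ⊗ H`: the left
side of `(K ⊗ 1) · R · (1 ⊗ K) · R₂₁ = Δ(K)`, the right side of `R · (1 ⊗ K) · R₂₁ · (K ⊗ 1)`,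
which is `R · Δ^op(K) · R⁻¹`. The two agree because `R` intertwines `Δ` and `Δ^op`.
-/

open scoped TensorProduct

noncomputable section

variable (k H : Type*) [Field k] [Ring H] [Bialgebra k H]

/-- The flip `a ⊗ b ↦ b ⊗ a` on `H ⊗[k] H`, as an algebra homomorphism. -/
def tflip : H ⊗[k] H →ₐ[k] H ⊗[k] H := (Algebra.TensorProduct.comm k H H).toAlgHom

/-- `s ⊗ t ↦ s ⊗ t ⊗ 1 : H ⊗ H → H ⊗ H ⊗ H`. -/
def leg12 : H ⊗[k] H →ₐ[k] H ⊗[k] (H ⊗[k] H) :=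
  Algebra.TensorProduct.map (AlgHom.id k H) Algebra.TensorProduct.includeLeft

/-- `s ⊗ t ↦ s ⊗ 1 ⊗ t : H ⊗ H → H ⊗ H ⊗ H`. -/
def leg13 : H ⊗[k] H →ₐ[k] H ⊗[k] (H ⊗[k] H) :=
  Algebra.TensorProduct.map (AlgHom.id k H) Algebra.TensorProduct.includeRight

/-- `s ⊗ t ↦ 1 ⊗ s ⊗ t : H ⊗ H → H ⊗ H ⊗ H`. -/
def leg23 : H ⊗[k] H →ₐ[k] H ⊗[k] (H ⊗[k] H) :=
  Algebra.TensorProduct.includeRight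

/-- `Δ ⊗ id : H ⊗ H → H ⊗ H ⊗ H`. -/
def comulLeft : H ⊗[k] H →ₐ[k] H ⊗[k] (H ⊗[k] H) :=
  (Algebra.TensorProduct.assoc (R := k) (S := k) (T := k) (A := H) (C := H) (D := H)).toAlgHom.comp
    (Algebra.TensorProduct.map (Bialgebra.comulAlgHom k H) (AlgHom.id k H))

/-- `id ⊗ Δ : H ⊗ H → H ⊗ H ⊗ H`. -/
def comulRight : H ⊗[k] H →ₐ[k] H ⊗[k] (H ⊗[k] H) :=
  Algebra.TensorProduct.map (AlgHom.id k H) (Bialgebra.comulAlgHom k H)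

/-- `(H, R)` is a braided bialgebra with `R⁻¹ = Rinv`:  `R` is an invertible element of
`H ⊗ H` satisfying `Δ(x) · R = R · Δ^op(x)` for all `x` and the two hexagon identities
`(Δ ⊗ id)(R) = R₂₃ · R₁₃` and `(id ⊗ Δ)(R) = R₁₂ · R₁₃`. -/
def IsUniversalRMatrix (R Rinv : H ⊗[k] H) : Prop :=
  R * Rinv = 1 ∧ Rinv * R = 1 ∧
  (∀ x : H, Bialgebra.comulAlgHom k H x * R = R * tflip k H (Bialgebra.comulAlgHom k H x)) ∧
  comulLeft k H R = leg23 k H R * leg13 k H R ∧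
  comulRight k H R = leg12 k H R * leg13 k H R

/-- The action of an element `z = Σ sᵢ ⊗ tᵢ` of `H ⊗ H` on `M ⊗ N`
(first leg acting on `M`, second leg acting on `N`). -/
def act2 (M N : Type*) [AddCommGroup M] [Module k M] [Module H M]
    [IsScalarTower k H M] [SMulCommClass H k M]
    [AddCommGroup N] [Module k N] [Module H N]
    [IsScalarTower k H N] [SMulCommClass H k N]
    (z : H ⊗[k] H) : M ⊗[k] N →ₗ[k] M ⊗[k] N :=
  TensorProduct.homTensorHomMap (RingHom.id k) M N M N
    (TensorProduct.map (Algebra.lsmul k k M (A := H)).toLinearMap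
      (Algebra.lsmul k k N (A := H)).toLinearMap z)

/-- The braiding-type map `M ⊗ N → N ⊗ M` determined by `z = Σ sᵢ ⊗ tᵢ ∈ H ⊗ H`:
`m ⊗ n ↦ Σ (sᵢ · n) ⊗ (tᵢ · m)`. -/
def braidMap (M N : Type*) [AddCommGroup M] [Module k M] [Module H M]
    [IsScalarTower k H M] [SMulCommClass H k M]
    [AddCommGroup N] [Module k N] [Module H N]
    [IsScalarTower k H N] [SMulCommClass H k N]
    (z : H ⊗[k] H) : M ⊗[k] N →ₗ[k] N ⊗[k] M :=
  (act2 k H N M z).comp (TensorProduct.comm k M N).toLinearMap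

/-- The `k`-linear endomorphism of `M` given by the action of `K ∈ H`. -/
def actK (M : Type*) [AddCommGroup M] [Module k M] [Module H M]
    [IsScalarTower k H M] [SMulCommClass H k M]
    (K : H) : M →ₗ[k] M :=
  Algebra.lsmul k k M (A := H) K

@[simp]
lemma tflip_tmul (a b : H) : tflip k H (a ⊗ₜ[k] b) = b ⊗ₜ[k] a := rfl

@[simp]
lemma tflip_tflip (z : H ⊗[k] H) : tflip k H (tflip k H z) = z :=
  TensorProduct.comm_comm k H H z

namespace IsUniversalRMatrix

variable {k H} {R Rinv : H ⊗[k] H}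

lemma comul_eq_mul_tflip_comul_mul (hR : IsUniversalRMatrix k H R Rinv) (x : H) :
    Bialgebra.comulAlgHom k H x = R * tflip k H (Bialgebra.comulAlgHom k H x) * Rinv := by
  rw [← hR.2.2.1, mul_assoc, hR.1, mul_one]

end IsUniversalRMatrix

section Action

variable (M N : Type*) [AddCommGroup M] [Module k M] [Module H M]
    [IsScalarTower k H M] [SMulCommClass H k M]
    [AddCommGroup N] [Module k N] [Module H N]
    [IsScalarTower k H N] [SMulCommClass H k N]

@[simp]
lemma act2_tmul_tmul (s t : H) (m : M) (n : N) :
    act2 k H M N (s ⊗ₜ[k] t) (m ⊗ₜ[k] n) = (s • m) ⊗ₜ[k] (t • n) := by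
  simp [act2]

lemma act2_add (z w : H ⊗[k] H) :
    act2 k H M N (z + w) = act2 k H M N z + act2 k H M N w := by
  simp [act2]

lemma act2_mul (z w : H ⊗[k] H) :
    act2 k H M N (z * w) = act2 k H M N z ∘ₗ act2 k H M N w := by
  induction z using TensorProduct.induction_on with
  | zero => simp [act2]
  | add x y hx hy => rw [add_mul, act2_add, act2_add, hx, hy, LinearMap.add_comp]
  | tmul s t =>
    induction w using TensorProduct.induction_on with
    | zero => simp [act2]
    | add x y hx hy => rw [mul_add, act2_add, act2_add, hx, hy, LinearMap.comp_add]
    | tmul u v =>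
      ext m n
      simp [mul_smul]

lemma act2_tmul_one (K : H) :
    act2 k H M N (K ⊗ₜ[k] 1) = TensorProduct.map (actK k H M K) LinearMap.id := by
  ext m n
  simp [actK]

lemma act2_tflip_comp_comm (z : H ⊗[k] H) :
    act2 k H N M (tflip k H z) ∘ₗ (TensorProduct.comm k M N).toLinearMap
      = (TensorProduct.comm k M N).toLinearMap ∘ₗ act2 k H M N z := by
  induction z using TensorProduct.induction_on with
  | zero => simp [act2]
  | add x y hx hy =>
    rw [map_add, act2_add, act2_add, LinearMap.add_comp, LinearMap.comp_add, hx, hy]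
  | tmul s t =>
    ext m n
    simp

lemma act2_comp_braidMap (z w : H ⊗[k] H) :
    act2 k H N M z ∘ₗ braidMap k H M N w = braidMap k H M N (z * w) := by
  rw [braidMap, braidMap, act2_mul, LinearMap.comp_assoc]

lemma braidMap_comp_act2 (z w : H ⊗[k] H) :
    braidMap k H M N z ∘ₗ act2 k H M N w = braidMap k H M N (z * tflip k H w) := by
  rw [braidMap, braidMap, LinearMap.comp_assoc, ← act2_tflip_comp_comm, act2_mul,
    LinearMap.comp_assoc]

lemma braidMap_comp_braidMap (z w : H ⊗[k] H) :
    braidMap k H N M z ∘ₗ braidMap k H M N w = act2 k H M N (z * tflip k H w) :=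
  calc braidMap k H N M z ∘ₗ braidMap k H M N w
      = (braidMap k H N M z ∘ₗ act2 k H N M w) ∘ₗ (TensorProduct.comm k M N).toLinearMap := rfl
    _ = act2 k H M N (z * tflip k H w) := by
      rw [braidMap_comp_act2, braidMap, LinearMap.comp_assoc, TensorProduct.comm_comp_comm,
        LinearMap.comp_id]

end Action

theorem reflection_equation_on_modules
    (R Rinv : H ⊗[k] H) (hR : IsUniversalRMatrix k H R Rinv)
    (K : H)
    (hΔK : Bialgebra.comulAlgHom k H K =
      (K ⊗ₜ[k] (1 : H)) * R * ((1 : H) ⊗ₜ[k] K) * tflip k H R)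
    (M N : Type*) [AddCommGroup M] [Module k M] [Module H M]
    [IsScalarTower k H M] [SMulCommClass H k M]
    [AddCommGroup N] [Module k N] [Module H N]
    [IsScalarTower k H N] [SMulCommClass H k N] :
    (TensorProduct.map (actK k H M K) LinearMap.id).comp
        ((braidMap k H N M R).comp
          ((TensorProduct.map (actK k H N K) LinearMap.id).comp (braidMap k H M N R)))
      = (braidMap k H N M R).comp
          ((TensorProduct.map (actK k H N K) LinearMap.id).comp
            ((braidMap k H M N R).comp
              (TensorProduct.map (actK k H M K) LinearMap.id))) := by
  have hΔK_conj : Bialgebra.comulAlgHom k H K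
      = R * ((1 : H) ⊗ₜ[k] K) * tflip k H R * (K ⊗ₜ[k] (1 : H)) := by
    rw [hR.comul_eq_mul_tflip_comul_mul, hΔK]
    simp only [map_mul, tflip_tmul, tflip_tflip, mul_assoc, hR.1, mul_one]
  simp only [← act2_tmul_one, act2_comp_braidMap, braidMap_comp_act2, braidMap_comp_braidMap,
    ← act2_mul]
  congr 1
  simp only [map_mul, tflip_tmul, ← mul_assoc]
  rw [← hΔK, hΔK_conj]
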